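/- Let α ∈ (0,1/2), let W₀ have density (α/(1-α))·u^{α/(1-α)-1} on (0,1), let (Pᵢ)_{i≥1} be i.i.d. with Pᵢ = 1 with probability α and Pᵢ = Uᵢ^{(1-α)/α} with probability 1-α (Uᵢ uniform on [0,1]), all independent of W₀, and set W_k = W₀·∏_{i=1}^k Pᵢ. Then E[W_k] = α·(α(2-α))^k and E[W_k^{(1-2α)/(1-α)}] = (α/(1-α))·(2α)^k for every k ≥ 0. -/

import Mathlib

open MeasureTheory ProbabilityTheory

/-- Law of the multiplicative step `Pᵢ`: equal to `1` with probability `α` and to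
`U^((1-α)/α)` with probability `1-α`, `U` uniform on `[0,1]`. -/
noncomputable def mixtureLaw (α : ℝ) : Measure ℝ :=
  ENNReal.ofReal α • Measure.dirac 1 +
    ENNReal.ofReal (1 - α) •
      Measure.map (fun u : ℝ => u ^ ((1 - α) / α)) (volume.restrict (Set.Icc (0 : ℝ) 1))

/-- Law of `W₀`: density `(α/(1-α)) u^(α/(1-α)-1)` on `(0,1)`. -/
noncomputable def initialLaw (α : ℝ) : Measure ℝ :=
  (volume.restrict (Set.Ioo (0 : ℝ) 1)).withDensity
    (fun u => ENNReal.ofReal (α / (1 - α) * u ^ (α / (1 - α) - 1)))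

/-!
Since the factors are a.s. nonnegative, `(∏ fᵢ)^p = ∏ fᵢ^p`, so independence gives
`E[W_k^p] = E[W₀^p] · E[P₁^p]^k` for every real `p`. Both moments are power integrals on
`[0,1]`: with `c = α/(1-α)`, `E[W₀^p] = c/(c+p)` and `E[P₁^p] = α + (1-α)/(p/c + 1)`.
The exponent `(1-2α)/(1-α)` is `1 - c`, which makes the first factor `c` and the second `2α`.
-/

lemma initialLaw_ae_nonneg (α : ℝ) : ∀ᵐ x ∂initialLaw α, 0 ≤ x :=
  (withDensity_absolutelyContinuous _ _).ae_le <|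
    (ae_restrict_mem measurableSet_Ioo).mono fun _ hx => hx.1.le

lemma mixtureLaw_ae_nonneg (α : ℝ) : ∀ᵐ x ∂mixtureLaw α, 0 ≤ x := by
  refine ae_add_measure_iff.mpr ⟨Measure.ae_smul_measure ?_ _, Measure.ae_smul_measure ?_ _⟩
  · exact (ae_dirac_iff measurableSet_Ici).mpr zero_le_one
  · rw [ae_map_iff (measurable_id'.pow_const _).aemeasurable measurableSet_Ici]
    exact (ae_restrict_mem measurableSet_Icc).mono fun u hu => Real.rpow_nonneg hu.1 _

lemma integral_initialLaw_rpow {α p : ℝ} (hα₀ : 0 < α) (hα₁ : α < 1)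
    (hp : -(α / (1 - α)) < p) :
    ∫ x, x ^ p ∂initialLaw α = α / (1 - α) / (α / (1 - α) + p) := by
  set c := α / (1 - α)
  have hc : 0 < c := div_pos hα₀ (by linarith)
  have hdens : Measurable fun u : ℝ => ENNReal.ofReal (c * u ^ (c - 1)) :=
    (measurable_const.mul (measurable_id'.pow_const (c - 1))).ennreal_ofReal
  have hexp : c - 1 + p + 1 = c + p := by ring
  have hintegrand : Set.EqOn (fun x : ℝ => (ENNReal.ofReal (c * x ^ (c - 1))).toReal • x ^ p)
      (fun x => c * x ^ (c - 1 + p)) (Set.Ioo 0 1) := by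
    intro x hx
    dsimp only
    rw [ENNReal.toReal_ofReal (mul_nonneg hc.le (Real.rpow_nonneg hx.1.le _)), smul_eq_mul,
      Real.rpow_add hx.1, mul_assoc]
  rw [initialLaw, integral_withDensity_eq_integral_toReal_smul hdens
      (.of_forall fun _ => ENNReal.ofReal_lt_top),
    setIntegral_congr_fun measurableSet_Ioo hintegrand, integral_const_mul,
    ← integral_Ioc_eq_integral_Ioo, ← intervalIntegral.integral_of_le zero_le_one,
    integral_rpow (Or.inl (by linarith)), hexp, Real.one_rpow,
    Real.zero_rpow (by linarith)]
  ring

lemma integral_mixtureLaw_rpow {α p : ℝ} (hα₀ : 0 < α) (hα₁ : α < 1) (hp : 0 ≤ p) :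
    ∫ x, x ^ p ∂mixtureLaw α = α + (1 - α) / ((1 - α) / α * p + 1) := by
  set e := (1 - α) / α
  have he : 0 < e := div_pos (by linarith) hα₀
  have hep : 0 ≤ e * p := mul_nonneg he.le hp
  have hpow : Measurable fun u : ℝ => u ^ e := measurable_id'.pow_const e
  have hrpow : Measurable fun x : ℝ => x ^ p := measurable_id'.pow_const p
  have hint_dirac : Integrable (fun x : ℝ => x ^ p) (Measure.dirac 1) :=
    integrable_dirac (by simp)
  have hint_map : Integrable (fun x : ℝ => x ^ p)
      (Measure.map (fun u : ℝ => u ^ e) (volume.restrict (Set.Icc (0 : ℝ) 1))) := by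
    rw [integrable_map_measure hrpow.aestronglyMeasurable hpow.aemeasurable]
    refine (integrable_const (1 : ℝ)).mono' (hpow.pow_const p).aestronglyMeasurable ?_
    refine (ae_restrict_mem measurableSet_Icc).mono fun u hu => ?_
    have h0 : 0 ≤ u ^ e := Real.rpow_nonneg hu.1 _
    rw [Function.comp_apply, Real.norm_of_nonneg (Real.rpow_nonneg h0 _)]
    exact Real.rpow_le_one h0 (Real.rpow_le_one hu.1 hu.2 he.le) hp
  have hcomp : Set.EqOn (fun u : ℝ => (u ^ e) ^ p) (fun u => u ^ (e * p)) (Set.Icc 0 1) :=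
    fun u hu => (Real.rpow_mul hu.1 e p).symm
  rw [mixtureLaw, integral_add_measure (hint_dirac.smul_measure ENNReal.ofReal_ne_top)
      (hint_map.smul_measure ENNReal.ofReal_ne_top), integral_smul_measure,
    integral_smul_measure, integral_dirac, integral_map hpow.aemeasurable
      hrpow.aestronglyMeasurable, ENNReal.toReal_ofReal hα₀.le,
    ENNReal.toReal_ofReal (by linarith), Real.one_rpow,
    setIntegral_congr_fun measurableSet_Icc hcomp, integral_Icc_eq_integral_Ioc,
    ← intervalIntegral.integral_of_le zero_le_one, integral_rpow (Or.inl (by linarith)),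
    Real.one_rpow, Real.zero_rpow (by linarith)]
  simp only [smul_eq_mul]
  ring

namespace ProbabilityTheory

variable {Ω : Type*} [MeasurableSpace Ω] {P : Measure Ω}

section Finset

variable {ι : Type*} {f : ι → Ω → ℝ}

lemma iIndepFun.integral_finset_prod (hf : iIndepFun f P) (hmeas : ∀ i, Measurable (f i))
    (s : Finset ι) : ∫ ω, ∏ i ∈ s, f i ω ∂P = ∏ i ∈ s, ∫ ω, f i ω ∂P := by
  simp_rw [← Finset.prod_coe_sort s]
  exact (hf.precomp Subtype.val_injective).integral_fun_prod_eq_prod_integral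
    fun i => (hmeas i).aestronglyMeasurable

lemma iIndepFun.integral_finset_prod_rpow (hf : iIndepFun f P) (hmeas : ∀ i, Measurable (f i))
    (hnn : ∀ i, ∀ᵐ ω ∂P, 0 ≤ f i ω) (s : Finset ι) (p : ℝ) :
    ∫ ω, (∏ i ∈ s, f i ω) ^ p ∂P = ∏ i ∈ s, ∫ ω, f i ω ^ p ∂P := by
  have hpow : (fun ω => (∏ i ∈ s, f i ω) ^ p) =ᵐ[P] fun ω => ∏ i ∈ s, f i ω ^ p := by
    filter_upwards [(Filter.eventually_all_finset s).mpr fun i _ => hnn i] with ω hω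
    exact (Real.finsetProd_rpow s _ hω p).symm
  rw [integral_congr_ae hpow]
  exact (hf.comp (fun _ x => x ^ p) fun _ => measurable_id'.pow_const p).integral_finset_prod
    (fun i => (hmeas i).pow_const p) s

end Finset

lemma iIndepFun.integral_prod_range_rpow_of_map_eq {f : ℕ → Ω → ℝ} {μ₀ μ : Measure ℝ}
    (hf : iIndepFun f P) (hmeas : ∀ i, Measurable (f i)) (hf₀ : P.map (f 0) = μ₀)
    (hf_succ : ∀ i, P.map (f (i + 1)) = μ)
    (hμ₀ : ∀ᵐ x ∂μ₀, 0 ≤ x) (hμ : ∀ᵐ x ∂μ, 0 ≤ x) (p : ℝ) (k : ℕ) :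
    ∫ ω, (∏ i ∈ Finset.range (k + 1), f i ω) ^ p ∂P =
      (∫ x, x ^ p ∂μ₀) * (∫ x, x ^ p ∂μ) ^ k := by
  have hnn : ∀ i, ∀ᵐ ω ∂P, 0 ≤ f i ω := by
    rintro (_ | i)
    · exact ae_of_ae_map (hmeas 0).aemeasurable (hf₀ ▸ hμ₀)
    · exact ae_of_ae_map (hmeas _).aemeasurable (hf_succ i ▸ hμ)
  have hmoment (i : ℕ) : ∫ ω, f i ω ^ p ∂P = ∫ x, x ^ p ∂P.map (f i) :=
    (integral_map (hmeas i).aemeasurable (measurable_id'.pow_const p).aestronglyMeasurable).symm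
  rw [hf.integral_finset_prod_rpow hmeas hnn, Finset.prod_range_succ', mul_comm]
  simp only [hmoment, hf₀, hf_succ, Finset.prod_const, Finset.card_range]

end ProbabilityTheory

theorem stmt_11_general {Ω : Type*} [MeasurableSpace Ω] (P : Measure Ω)
    (α : ℝ) (hα : α ∈ Set.Ioo (0 : ℝ) (1 / 2))
    (f : ℕ → Ω → ℝ) (hmeas : ∀ i, Measurable (f i))
    (hindep : iIndepFun f P)
    (hW₀ : Measure.map (f 0) P = initialLaw α)
    (hP : ∀ i : ℕ, Measure.map (f (i + 1)) P = mixtureLaw α)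
    (k : ℕ) :
    (∫ ω, ∏ i ∈ Finset.range (k + 1), f i ω ∂P) = α * (α * (2 - α)) ^ k ∧
    (∫ ω, (∏ i ∈ Finset.range (k + 1), f i ω) ^ ((1 - 2 * α) / (1 - α)) ∂P) =
      α / (1 - α) * (2 * α) ^ k := by
  obtain ⟨hα₀, hα₂⟩ := hα
  have hα₁ : α < 1 := by linarith
  have h1α : 1 - α ≠ 0 := by linarith
  have hc : 0 < α / (1 - α) := div_pos hα₀ (by linarith)
  have hβ : 0 ≤ (1 - 2 * α) / (1 - α) := div_nonneg (by linarith) (by linarith)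
  have hcβ : α / (1 - α) + (1 - 2 * α) / (1 - α) = 1 := by field_simp; ring
  have hmixβ : α + (1 - α) / ((1 - α) / α * ((1 - 2 * α) / (1 - α)) + 1) = 2 * α := by
    have hden : (1 - α) / α * ((1 - 2 * α) / (1 - α)) + 1 = (1 - α) / α := by
      field_simp
      ring
    rw [hden, div_div_cancel₀ h1α]
    ring
  have hmoment := hindep.integral_prod_range_rpow_of_map_eq hmeas hW₀ hP
    (initialLaw_ae_nonneg α) (mixtureLaw_ae_nonneg α)
  constructor
  · have h := hmoment 1 k
    rw [integral_initialLaw_rpow hα₀ hα₁ (by linarith),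
      integral_mixtureLaw_rpow hα₀ hα₁ zero_le_one] at h
    simp only [Real.rpow_one] at h
    rw [h]
    field_simp
    ring
  · rw [hmoment, integral_initialLaw_rpow hα₀ hα₁ (by linarith),
      integral_mixtureLaw_rpow hα₀ hα₁ hβ, hcβ, hmixβ, div_one]

theorem stmt_11 {Ω : Type*} [MeasurableSpace Ω] (P : Measure Ω) [IsProbabilityMeasure P]
    (α : ℝ) (hα : α ∈ Set.Ioo (0 : ℝ) (1 / 2))
    (f : ℕ → Ω → ℝ) (hmeas : ∀ i, Measurable (f i))
    (hindep : iIndepFun f P)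
    (hW₀ : Measure.map (f 0) P = initialLaw α)
    (hP : ∀ i : ℕ, Measure.map (f (i + 1)) P = mixtureLaw α)
    (k : ℕ) :
    (∫ ω, ∏ i ∈ Finset.range (k + 1), f i ω ∂P) = α * (α * (2 - α)) ^ k ∧
    (∫ ω, (∏ i ∈ Finset.range (k + 1), f i ω) ^ ((1 - 2 * α) / (1 - α)) ∂P) =
      α / (1 - α) * (2 * α) ^ k :=
  stmt_11_general P α hα f hmeas hindep hW₀ hP k
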